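/- In the set-function formulation with standard weights, efficiency holds: Σ_{i ∈ Fin d} φ_v(i) = v(univ) − v(∅). -/

import Mathlib

/-!
Exchanging the sums over players and coalitions, a coalition `T` collects `v T` with
coefficient `|T| w(|T| - 1)` from the players it contains and `-(d - |T|) w(|T|)` from those it
does not, where `w s = s! (d - s - 1)! / d!`. Both products equal `1 / C(d, |T|)` (for `T ≠ ∅`,
resp. `T ≠ univ`), so the total is
`∑_{T ≠ ∅} v T / C(d, |T|) - ∑_{T ≠ univ} v T / C(d, |T|) = v univ - v ∅`.
-/

open Finset

/-- Shapley value of player `i` for a set function `v` on coalitions in `Fin d`,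
with the standard weights `|S|! (d − |S| − 1)! / d!`. -/
noncomputable def shapley {d : ℕ} (v : Finset (Fin d) → ℝ) (i : Fin d) : ℝ :=
  ∑ S ∈ (Finset.univ.erase i).powerset,
    ((S.card.factorial * (d - S.card - 1).factorial : ℕ) : ℝ) / (d.factorial : ℝ) *
      (v (insert i S) - v S)

open Nat

noncomputable def shapleyWeight (d s : ℕ) : ℝ :=
  ((s ! * (d - s - 1)! : ℕ) : ℝ) / d !

theorem natCast_mul_shapleyWeight_pred {d k : ℕ} (hk : k ≠ 0) (hkd : k ≤ d) :
    k * shapleyWeight d (k - 1) = ((d.choose k : ℕ) : ℝ)⁻¹ := by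
  have hfac : k * ((k - 1)! * (d - k)!) * d.choose k = d ! := by
    rw [← mul_assoc, mul_factorial_pred hk, mul_comm, ← mul_assoc,
      choose_mul_factorial_mul_factorial hkd]
  rw [shapleyWeight, show d - (k - 1) - 1 = d - k by omega]
  apply eq_inv_of_mul_eq_one_left
  field_simp
  exact_mod_cast hfac

theorem natCast_sub_mul_shapleyWeight {d k : ℕ} (hkd : k < d) :
    ((d - k : ℕ) : ℝ) * shapleyWeight d k = ((d.choose k : ℕ) : ℝ)⁻¹ := by
  have hfac : (d - k) * (k ! * (d - k - 1)!) * d.choose k = d ! := by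
    rw [mul_left_comm, mul_factorial_pred (by omega), mul_comm, ← mul_assoc,
      choose_mul_factorial_mul_factorial hkd.le]
  rw [shapleyWeight]
  apply eq_inv_of_mul_eq_one_left
  field_simp
  exact_mod_cast hfac

section

variable {α β : Type*} [Fintype α] [DecidableEq α] [AddCommMonoid β]

theorem sum_sum_powerset_erase_eq_sum_sum_compl (f : α → Finset α → β) :
    ∑ i, ∑ S ∈ (univ.erase i).powerset, f i S = ∑ T, ∑ i ∈ Tᶜ, f i T :=
  sum_comm' fun i T => by simp [subset_erase]

theorem sum_powerset_erase_eq_sum_filter_mem (i : α) (g : Finset α → β) :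
    ∑ S ∈ (univ.erase i).powerset, g S = ∑ T : Finset α with i ∈ T, g (T.erase i) :=
  sum_nbij' (insert i) (fun T => T.erase i) (by simp)
    (fun T _ => mem_powerset.2 (erase_subset_erase i (subset_univ T)))
    (fun S hS => erase_insert (subset_erase.1 (mem_powerset.1 hS)).2)
    (fun T hT => insert_erase (by simpa using hT))
    (fun S hS => by rw [erase_insert (subset_erase.1 (mem_powerset.1 hS)).2])

theorem sum_sum_powerset_erase_eq_sum_sum_erase (f : α → Finset α → β) :
    ∑ i, ∑ S ∈ (univ.erase i).powerset, f i S = ∑ T, ∑ i ∈ T, f i (T.erase i) := by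
  simp_rw [sum_powerset_erase_eq_sum_filter_mem]
  exact sum_comm' fun i T => by simp

end

theorem shapley_eq_sum_shapleyWeight {d : ℕ} (v : Finset (Fin d) → ℝ) (i : Fin d) :
    shapley v i = ∑ S ∈ (univ.erase i).powerset, shapleyWeight d #S * (v (insert i S) - v S) :=
  rfl

theorem sum_sum_shapleyWeight_mul_insert {d : ℕ} (v : Finset (Fin d) → ℝ) :
    ∑ i, ∑ S ∈ (univ.erase i).powerset, shapleyWeight d #S * v (insert i S) =
      ∑ T ∈ univ.erase ∅, v T / d.choose #T := by
  rw [sum_sum_powerset_erase_eq_sum_sum_erase, ← sum_erase univ (a := ∅) (by simp)]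
  refine sum_congr rfl fun T hT => ?_
  have hcard : #T ≠ 0 := card_ne_zero.2 (nonempty_iff_ne_empty.2 (ne_of_mem_erase hT))
  rw [sum_congr rfl fun i hi => by rw [insert_erase hi, card_erase_of_mem hi], sum_const,
    nsmul_eq_mul, ← mul_assoc, natCast_mul_shapleyWeight_pred hcard
      ((card_le_univ T).trans_eq (Fintype.card_fin d)), inv_mul_eq_div]

theorem sum_sum_shapleyWeight_mul {d : ℕ} (v : Finset (Fin d) → ℝ) :
    ∑ i, ∑ S ∈ (univ.erase i).powerset, shapleyWeight d #S * v S =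
      ∑ T ∈ univ.erase univ, v T / d.choose #T := by
  rw [sum_sum_powerset_erase_eq_sum_sum_compl, ← sum_erase univ (a := univ) (by simp)]
  refine sum_congr rfl fun T hT => ?_
  have hcard : #T < d := by simpa using (card_lt_iff_ne_univ T).2 (ne_of_mem_erase hT)
  rw [sum_const, card_compl, Fintype.card_fin, nsmul_eq_mul, ← mul_assoc,
    natCast_sub_mul_shapleyWeight hcard, inv_mul_eq_div]

theorem shapley_efficiency_general {d : ℕ} (v : Finset (Fin d) → ℝ) :
    ∑ i : Fin d, shapley v i = v Finset.univ - v ∅ := by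
  simp only [shapley_eq_sum_shapleyWeight, mul_sub, sum_sub_distrib]
  rw [sum_sum_shapleyWeight_mul_insert, sum_sum_shapleyWeight_mul,
    sum_erase_eq_sub (mem_univ _), sum_erase_eq_sub (mem_univ _)]
  simp only [card_empty, Finset.card_fin, choose_zero_right, choose_self, cast_one, div_one]
  abel

/-- Efficiency: the total Shapley payoff equals the grand-coalition worth minus
the empty-coalition worth. -/
theorem shapley_efficiency {d : ℕ} (hd : 1 ≤ d) (v : Finset (Fin d) → ℝ) :
    ∑ i : Fin d, shapley v i = v Finset.univ - v ∅ :=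
  shapley_efficiency_general v
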